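/- arXiv:2205.00889 — 2 statements merged into one kernel-verified Lean document; each statement's English description precedes it below -/
import Mathlib

section
/- If a₁ and a₂ are piecewise linear functions with b₁ and b₂ breakpoints respectively, then the composition a₂ ∘ a₁ (where a₁ is non-decreasing) is piecewise linear with at most b₁ + b₂ - 1 breakpoints. -/
/-- `f` is piecewise linear with `b` breakpoints `t 0 < t 1 < ⋯ < t (b-1)`,
affine between consecutive breakpoints. -/
def PiecewiseLinearOn (f : ℝ → ℝ) (t : ℕ → ℝ) (b : ℕ) : Prop :=
  (∀ i, i + 1 ≤ b - 1 → t i < t (i + 1)) ∧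
  ∀ i, i + 1 ≤ b - 1 → ∃ m c : ℝ, ∀ x ∈ Set.Icc (t i) (t (i + 1)), f x = m * x + c

/-! Every breakpoint of `a₂ ∘ a₁` is a breakpoint of `a₁` or a point where `a₁` crosses an inner
breakpoint level `y` of `a₂`. As `a₁` is non-decreasing, it crosses each level strictly at most
once, namely at the last point where `a₁ ≤ y`; so the `b₁` breakpoints of `a₁` and these `b₂ - 2`
crossing points, sorted, are breakpoints for the composition. -/

open Set

def AffineOn (f : ℝ → ℝ) (s : Set ℝ) : Prop :=
  ∃ m c : ℝ, ∀ x ∈ s, f x = m * x + c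

theorem AffineOn.mono {f : ℝ → ℝ} {s s' : Set ℝ} (h : AffineOn f s) (hs : s' ⊆ s) :
    AffineOn f s' :=
  let ⟨m, c, hf⟩ := h
  ⟨m, c, fun x hx => hf x (hs hx)⟩

theorem AffineOn.comp {f g : ℝ → ℝ} {s s' : Set ℝ} (hg : AffineOn g s') (hf : AffineOn f s)
    (hfs : MapsTo f s s') : AffineOn (g ∘ f) s := by
  obtain ⟨m, c, hf⟩ := hf
  obtain ⟨m', c', hg⟩ := hg
  refine ⟨m' * m, m' * c + c', fun x hx => ?_⟩
  rw [Function.comp_apply, hg _ (hfs hx), hf x hx]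
  ring

theorem csSup_sublevel_mem_Ioo {f : ℝ → ℝ} {s : Set ℝ} {u v y : ℝ} (hf : MonotoneOn f s)
    (hs : s.OrdConnected) (hu : u ∈ s) (hv : v ∈ s) (haff : AffineOn f (Icc u v))
    (hyu : f u < y) (hyv : y < f v) :
    sSup {x ∈ s | f x ≤ y} ∈ Ioo u v := by
  obtain ⟨m, c, hmc⟩ := haff
  have huv : u < v := lt_of_not_ge fun hvu => (hf hv hu hvu).not_gt (hyu.trans hyv)
  have hfu := hmc u ⟨le_rfl, huv.le⟩
  have hfv := hmc v ⟨huv.le, le_rfl⟩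
  have hm : 0 < m := by nlinarith
  set x₀ := (y - c) / m
  have hux₀ : u < x₀ := by rw [lt_div_iff₀ hm]; linarith
  have hx₀v : x₀ < v := by rw [div_lt_iff₀ hm]; linarith
  have hx₀ : x₀ ∈ Icc u v := ⟨hux₀.le, hx₀v.le⟩
  have hfx₀ : f x₀ = y := by rw [hmc x₀ hx₀, mul_div_cancel₀ _ hm.ne']; ring
  suffices IsGreatest {x ∈ s | f x ≤ y} x₀ by rw [this.csSup_eq]; exact ⟨hux₀, hx₀v⟩
  refine ⟨⟨hs.out hu hv hx₀, hfx₀.le⟩, fun z ⟨hzs, hzy⟩ => le_of_not_gt fun hx₀z => ?_⟩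
  rcases le_or_gt z v with hzv | hvz
  · rw [hmc z ⟨hux₀.le.trans hx₀z.le, hzv⟩] at hzy
    rw [hmc x₀ hx₀] at hfx₀
    nlinarith
  · linarith [hf hv hzs hvz.le]

theorem exists_piecewiseLinearOn_of_affineOn_gaps (f : ℝ → ℝ) (S : Finset ℝ) (hS : S.Nonempty)
    (hgap : ∀ u ∈ S, ∀ v ∈ S, u < v → (∀ w ∈ S, w ≤ u ∨ v ≤ w) → AffineOn f (Icc u v)) :
    ∃ t : ℕ → ℝ, t 0 = S.min' hS ∧ t (S.card - 1) = S.max' hS ∧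
      PiecewiseLinearOn f t S.card := by
  set e := S.orderEmbOfFin rfl
  have hpos : 0 < S.card := hS.card_pos
  let t : ℕ → ℝ := fun n => if h : n < S.card then e ⟨n, h⟩ else 0
  have ht : ∀ n (h : n < S.card), t n = e ⟨n, h⟩ := fun n h => dif_pos h
  have hlt : ∀ i, i + 1 ≤ S.card - 1 → t i < t (i + 1) := fun i hi => by
    rw [ht i (by omega), ht (i + 1) (by omega)]
    exact e.strictMono (Fin.mk_lt_mk.2 (Nat.lt_succ_self i))
  refine ⟨t, by rw [ht 0 hpos]; exact Finset.orderEmbOfFin_zero rfl hpos,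
    by rw [ht _ (by omega)]; exact Finset.orderEmbOfFin_last rfl hpos, hlt, fun i hi => ?_⟩
  have hlt' := hlt i hi
  rw [ht i (by omega), ht (i + 1) (by omega)] at hlt' ⊢
  refine hgap _ (S.orderEmbOfFin_mem rfl _) _ (S.orderEmbOfFin_mem rfl _) hlt' fun w hw => ?_
  obtain ⟨k, rfl⟩ : w ∈ range e := by rwa [Finset.range_orderEmbOfFin]
  rcases le_or_gt (k : ℕ) i with hk | hk
  · exact Or.inl (e.monotone (Fin.mk_le_mk.2 hk))
  · exact Or.inr (e.monotone (Fin.mk_le_mk.2 hk))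

namespace PiecewiseLinearOn

variable {f : ℝ → ℝ} {t : ℕ → ℝ} {b : ℕ}

theorem strictMonoOn (h : PiecewiseLinearOn f t b) : StrictMonoOn t (Iic (b - 1)) :=
  strictMonoOn_Iic_of_lt_succ fun m hm => by simpa using h.1 m hm

theorem mem_Icc (h : PiecewiseLinearOn f t b) {i : ℕ} (hi : i ≤ b - 1) :
    t i ∈ Icc (t 0) (t (b - 1)) :=
  ⟨h.strictMonoOn.monotoneOn (Nat.zero_le _) hi (Nat.zero_le i),
    h.strictMonoOn.monotoneOn hi (mem_Iic.2 le_rfl) hi⟩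

theorem affineOn_Icc (h : PiecewiseLinearOn f t b) (hb : 2 ≤ b) {u v : ℝ} (hu : t 0 ≤ u)
    (hv : v ≤ t (b - 1)) (hgap : ∀ i, 0 < i → i < b - 1 → t i ≤ u ∨ v ≤ t i) :
    AffineOn f (Icc u v) := by
  set i := Nat.findGreatest (fun i => t i ≤ u) (b - 2)
  have hib : i ≤ b - 2 := Nat.findGreatest_le _
  have hiu : t i ≤ u := Nat.findGreatest_spec (P := fun i => t i ≤ u) (Nat.zero_le _) hu
  have hvi : v ≤ t (i + 1) := by
    rcases lt_or_eq_of_le hib with hi | hi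
    · exact (hgap (i + 1) (Nat.succ_pos i) (by omega)).resolve_left
        (Nat.findGreatest_is_greatest (Nat.lt_succ_self i) (by omega))
    · rwa [hi, show b - 2 + 1 = b - 1 by omega]
  exact (show AffineOn f _ from h.2 i (by omega)).mono (Icc_subset_Icc hiu hvi)

end PiecewiseLinearOn

section Composition

variable {a₁ a₂ : ℝ → ℝ} {b₁ b₂ : ℕ} {t1 t2 : ℕ → ℝ}

/-- The filter only discards the junk value `sSup ∅ = 0`. -/
noncomputable def compositionBreakpoints (a₁ : ℝ → ℝ) (t1 t2 : ℕ → ℝ) (b₁ b₂ : ℕ) :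
    Finset ℝ :=
  ((Finset.range b₁).image t1 ∪ (Finset.Icc 1 (b₂ - 2)).image
      fun j => sSup {x ∈ Icc (t1 0) (t1 (b₁ - 1)) | a₁ x ≤ t2 j}).filter
    (· ∈ Icc (t1 0) (t1 (b₁ - 1)))

theorem card_compositionBreakpoints_le :
    (compositionBreakpoints a₁ t1 t2 b₁ b₂).card ≤ b₁ + (b₂ - 2) := by
  unfold compositionBreakpoints
  refine (Finset.card_filter_le _ _).trans <| (Finset.card_union_le _ _).trans ?_
  gcongr
  · exact Finset.card_image_le.trans (Finset.card_range b₁).le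
  · exact Finset.card_image_le.trans (by simp)

theorem mem_Icc_of_mem_compositionBreakpoints {x : ℝ}
    (hx : x ∈ compositionBreakpoints a₁ t1 t2 b₁ b₂) : x ∈ Icc (t1 0) (t1 (b₁ - 1)) :=
  (Finset.mem_filter.1 hx).2

theorem PiecewiseLinearOn.mem_compositionBreakpoints (h₁ : PiecewiseLinearOn a₁ t1 b₁) {i : ℕ}
    (hi : i < b₁) : t1 i ∈ compositionBreakpoints a₁ t1 t2 b₁ b₂ :=
  Finset.mem_filter.2 ⟨Finset.mem_union_left _ (Finset.mem_image_of_mem t1 (Finset.mem_range.2 hi)),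
    h₁.mem_Icc (by omega)⟩

theorem affineOn_comp_of_compositionBreakpoints_gap (hb₁ : 2 ≤ b₁) (hb₂ : 2 ≤ b₂)
    (h₁ : PiecewiseLinearOn a₁ t1 b₁) (h₂ : PiecewiseLinearOn a₂ t2 b₂)
    (hmono : MonotoneOn a₁ (Icc (t1 0) (t1 (b₁ - 1))))
    (hmap : MapsTo a₁ (Icc (t1 0) (t1 (b₁ - 1))) (Icc (t2 0) (t2 (b₂ - 1))))
    {u v : ℝ} (hu : u ∈ Icc (t1 0) (t1 (b₁ - 1))) (hv : v ∈ Icc (t1 0) (t1 (b₁ - 1)))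
    (hgap : ∀ w ∈ compositionBreakpoints a₁ t1 t2 b₁ b₂, w ≤ u ∨ v ≤ w) :
    AffineOn (a₂ ∘ a₁) (Icc u v) := by
  have hsub : Icc u v ⊆ Icc (t1 0) (t1 (b₁ - 1)) := Icc_subset_Icc hu.1 hv.2
  have haff₁ : AffineOn a₁ (Icc u v) :=
    h₁.affineOn_Icc hb₁ hu.1 hv.2 fun i _ hi => hgap _ (h₁.mem_compositionBreakpoints (by omega))
  have hlevels : ∀ j, 0 < j → j < b₂ - 1 → t2 j ≤ a₁ u ∨ a₁ v ≤ t2 j := by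
    intro j hj hj'
    by_contra! hcross
    have hx := csSup_sublevel_mem_Ioo hmono ordConnected_Icc hu hv haff₁ hcross.1 hcross.2
    have hxS : sSup {x ∈ Icc (t1 0) (t1 (b₁ - 1)) | a₁ x ≤ t2 j} ∈
        compositionBreakpoints a₁ t1 t2 b₁ b₂ :=
      Finset.mem_filter.2 ⟨Finset.mem_union_right _ (Finset.mem_image_of_mem _
        (Finset.mem_Icc.2 ⟨hj, by omega⟩)), hsub (Ioo_subset_Icc_self hx)⟩
    rcases hgap _ hxS with hxu | hvx
    · exact hxu.not_gt hx.1
    · exact hvx.not_gt hx.2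
  exact (h₂.affineOn_Icc hb₂ (hmap hu).1 (hmap hv).2 hlevels).comp haff₁
    fun x hx => ⟨hmono hu (hsub hx) hx.1, hmono (hsub hx) hv hx.2⟩

end Composition

/-- the composition of piecewise linear functions with `b₁` and `b₂`
breakpoints (where `a₁` is non-decreasing and maps its domain into the domain of
`a₂`) is piecewise linear with at most `b₁ + b₂ - 1` breakpoints. -/
theorem composition_breakpoint_bound
    (a₁ a₂ : ℝ → ℝ) (b₁ b₂ : ℕ) (t1 t2 : ℕ → ℝ)
    (hb₁ : 2 ≤ b₁) (hb₂ : 2 ≤ b₂)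
    (h₁ : PiecewiseLinearOn a₁ t1 b₁) (h₂ : PiecewiseLinearOn a₂ t2 b₂)
    (hmono : MonotoneOn a₁ (Set.Icc (t1 0) (t1 (b₁ - 1))))
    (hmap : ∀ x ∈ Set.Icc (t1 0) (t1 (b₁ - 1)),
      a₁ x ∈ Set.Icc (t2 0) (t2 (b₂ - 1))) :
    ∃ (b : ℕ) (t : ℕ → ℝ), b ≤ b₁ + b₂ - 1 ∧ t 0 = t1 0 ∧ t (b - 1) = t1 (b₁ - 1) ∧
      PiecewiseLinearOn (fun x => a₂ (a₁ x)) t b := by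
  set S := compositionBreakpoints a₁ t1 t2 b₁ b₂
  have hbreak : ∀ i < b₁, t1 i ∈ S := fun i hi => h₁.mem_compositionBreakpoints hi
  have hS : S.Nonempty := ⟨t1 0, hbreak 0 (by omega)⟩
  obtain ⟨t, ht0, htlast, ht⟩ := exists_piecewiseLinearOn_of_affineOn_gaps (a₂ ∘ a₁) S hS
    fun u hu v hv _ hgap => affineOn_comp_of_compositionBreakpoints_gap hb₁ hb₂ h₁ h₂ hmono hmap
      (mem_Icc_of_mem_compositionBreakpoints hu) (mem_Icc_of_mem_compositionBreakpoints hv) hgap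
  refine ⟨S.card, t, card_compositionBreakpoints_le.trans (by omega), ht0.trans ?_,
    htlast.trans ?_, ht⟩
  · exact le_antisymm (S.min'_le _ (hbreak 0 (by omega)))
      (mem_Icc_of_mem_compositionBreakpoints (S.min'_mem hS)).1
  · exact le_antisymm (mem_Icc_of_mem_compositionBreakpoints (S.max'_mem hS)).2
      (S.le_max' _ (hbreak (b₁ - 1) (by omega)))
end

section
/- Let f : D → ℝ be a non-decreasing continuous piecewise linear function on an interval D, let ε > 0, and let g : D → ℝ be a line segment (an affine function restricted to a subinterval [t_a, t_b] ⊆ D) such that f(t) ≤ g(t) ≤ f(t) + ε for all t ∈ [t_a, t_b], and among all such line segments connecting two fixed vertical fibers, g has maximal slope. Then g is non-decreasing. -/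
/-!
If the maximal slope `m` were negative, the segment would descend from the fibre over `ta` to
the fibre over `tb`, forcing `f tb ≤ f ta + ε`. By monotonicity the horizontal segment at height
`f tb` then stays in the corridor, and its slope `0 > m` contradicts maximality.
-/

theorem MonotoneOn.const_mem_corridor {f : ℝ → ℝ} {a b ε : ℝ} (hf : MonotoneOn f (Set.Icc a b))
    (hab : a ≤ b) (hgap : f b ≤ f a + ε) :
    ∀ t ∈ Set.Icc a b, f t ≤ 0 * t + f b ∧ 0 * t + f b ≤ f t + ε := by
  intro t ht
  have hfb : f t ≤ f b := hf ht (Set.right_mem_Icc.2 hab) ht.2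
  have hfa : f a ≤ f t := hf (Set.left_mem_Icc.2 hab) ht ht.1
  constructor <;> linarith

theorem maximal_slope_segment_nondecreasing_general
    (f : ℝ → ℝ) (ta tb ε m q : ℝ) (hab : ta < tb)
    (hmono : MonotoneOn f (Set.Icc ta tb))
    (hin : ∀ t ∈ Set.Icc ta tb, f t ≤ m * t + q ∧ m * t + q ≤ f t + ε)
    (hmax : ∀ m' q' : ℝ,
      (∀ t ∈ Set.Icc ta tb, f t ≤ m' * t + q' ∧ m' * t + q' ≤ f t + ε) → m' ≤ m) :
    0 ≤ m := by
  by_contra! hneg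
  have hgap : f tb ≤ f ta + ε :=
    calc f tb ≤ m * tb + q := (hin tb (Set.right_mem_Icc.2 hab.le)).1
      _ ≤ m * ta + q := by nlinarith
      _ ≤ f ta + ε := (hin ta (Set.left_mem_Icc.2 hab.le)).2
  exact hneg.not_ge (hmax 0 (f tb) (hmono.const_mem_corridor hab.le hgap))

/-- if `g x = m * x + q` is a line segment in the corridor between a
non-decreasing continuous piecewise linear `f` and `f + ε` on `[ta, tb]`, with
maximal slope among all such segments connecting the two vertical fibers at `ta`
and `tb`, then `g` is non-decreasing, i.e. `0 ≤ m`. -/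
theorem maximal_slope_segment_nondecreasing
    (f : ℝ → ℝ) (ta tb ε m q : ℝ) (hab : ta < tb) (hε : 0 < ε)
    (hmono : MonotoneOn f (Set.Icc ta tb)) (hcont : ContinuousOn f (Set.Icc ta tb))
    (hpl : ∃ B : Finset ℝ, ∀ x ∈ Set.Icc ta tb, x ∉ B →
      ∃ ε' > 0, ∃ m' q' : ℝ, ∀ y ∈ Set.Icc ta tb, |y - x| < ε' → f y = m' * y + q')
    (hin : ∀ t ∈ Set.Icc ta tb, f t ≤ m * t + q ∧ m * t + q ≤ f t + ε)
    (hmax : ∀ m' q' : ℝ,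
      (∀ t ∈ Set.Icc ta tb, f t ≤ m' * t + q' ∧ m' * t + q' ≤ f t + ε) → m' ≤ m) :
    0 ≤ m :=
  maximal_slope_segment_nondecreasing_general f ta tb ε m q hab hmono hin hmax
end
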